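/- Let z : Σ → Σ be a map on a metric space (Σ, d) such that d(a, z(a)) ≤ l for all a ∈ Σ (e.g., snapping each point to a representative of its part in a partition of diameter l). Let x, y be strings of length at most n over Σ and x̃, ỹ the strings obtained by applying z letterwise. Then dtw(x̃, ỹ) ≥ dtw(x, y) − 4nl. -/

import Mathlib

/-!
Every correspondence of the snapped strings is the image under `z` of a correspondence of
`x` and `y`, and that correspondence contains a sub-correspondence with at most
`|x| + |y| ≤ 2n` aligned pairs: an aligned pair in which both letters are repeated can be
dropped. Undoing the snapping raises each aligned distance by at most `2l`, and dropping
pairs only lowers the snapped cost.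
-/

/-- `xb` is an expansion of `x`: each letter of `x` is duplicated in place a positive
number of times. -/
def IsExpansion {α : Type*} (x xb : List α) : Prop :=
  ∃ ks : List ℕ, ks.length = x.length ∧ (∀ k ∈ ks, 0 < k) ∧
    xb = (List.zipWith (fun a k => List.replicate k a) x ks).flatten

/-- `(xb, yb)` is a correspondence between `x` and `y`: a pair of equal-length expansions. -/
def IsCorrespondence {α : Type*} (x y xb yb : List α) : Prop :=
  IsExpansion x xb ∧ IsExpansion y yb ∧ xb.length = yb.length

/-- The cost of a correspondence: summed distances of aligned letters. -/
noncomputable def corrCost {α : Type*} (δ : α → α → ℝ) (xb yb : List α) : ℝ :=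
  (List.zipWith δ xb yb).sum

/-- Dynamic time warping distance with respect to a distance function `δ`. -/
noncomputable def dtw {α : Type*} (δ : α → α → ℝ) (x y : List α) : ℝ :=
  sInf {c | ∃ xb yb, IsCorrespondence x y xb yb ∧ c = corrCost δ xb yb}

/-- Generalized Hamming distance on letters. -/
noncomputable def hamDist {α : Type*} [DecidableEq α] (a b : α) : ℝ := if a = b then 0 else 1

/-- DTW over generalized Hamming space. -/
noncomputable def dtw0 {α : Type*} [DecidableEq α] (x y : List α) : ℝ := dtw hamDist x y

section Expansion

variable {α β : Type*}

theorem isExpansion_nil : IsExpansion ([] : List α) [] :=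
  ⟨[], rfl, by simp, rfl⟩

theorem IsExpansion.eq_nil {x : List α} (h : IsExpansion x []) : x = [] := by
  obtain ⟨ks, hlen, hpos, hflat⟩ := h
  cases x with
  | nil => rfl
  | cons a x =>
    obtain ⟨k, ks, rfl⟩ := List.exists_cons_of_length_eq_add_one hlen
    have hk : k = 0 := by simp_all
    exact absurd (hpos k List.mem_cons_self) (by omega)

theorem IsExpansion.cons_cons {x xb : List α} (a : α) (h : IsExpansion x xb) :
    IsExpansion (a :: x) (a :: xb) := by
  obtain ⟨ks, hlen, hpos, rfl⟩ := h
  refine ⟨1 :: ks, by simp [hlen], ?_, by simp⟩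
  simpa using hpos

theorem IsExpansion.cons_repeat {a : α} {x xb : List α} (h : IsExpansion (a :: x) xb) :
    IsExpansion (a :: x) (a :: xb) := by
  obtain ⟨ks, hlen, hpos, rfl⟩ := h
  obtain ⟨k, ks, rfl⟩ := List.exists_cons_of_length_eq_add_one hlen
  refine ⟨(k + 1) :: ks, by simpa using hlen, ?_, by simp [List.replicate_succ]⟩
  simp only [List.mem_cons, forall_eq_or_imp] at hpos ⊢
  exact ⟨k.succ_pos, hpos.2⟩

theorem IsExpansion.of_cons {c : α} {x xb : List α} (h : IsExpansion x (c :: xb)) :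
    ∃ a x', x = a :: x' ∧ c = a ∧ (IsExpansion x' xb ∨ IsExpansion (a :: x') xb) := by
  obtain ⟨ks, hlen, hpos, hflat⟩ := h
  cases x with
  | nil => simp at hflat
  | cons a x =>
    obtain ⟨k, ks, rfl⟩ := List.exists_cons_of_length_eq_add_one hlen
    simp only [List.mem_cons, forall_eq_or_imp] at hpos
    obtain ⟨k, rfl⟩ := Nat.exists_eq_add_one.mpr hpos.1
    simp only [List.zipWith_cons_cons, List.flatten_cons, List.replicate_succ,
      List.cons_append, List.cons.injEq] at hflat
    refine ⟨a, x, rfl, hflat.1, ?_⟩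
    rcases k with _ | k
    · exact Or.inl ⟨ks, by simpa using hlen, hpos.2, by simpa using hflat.2⟩
    · refine Or.inr ⟨(k + 1) :: ks, by simpa using hlen, ?_, hflat.2⟩
      simpa using hpos.2

theorem IsExpansion.map (f : α → β) {x xb : List α} (h : IsExpansion x xb) :
    IsExpansion (x.map f) (xb.map f) := by
  induction xb generalizing x with
  | nil => rw [h.eq_nil]; exact isExpansion_nil
  | cons c xb ih =>
    obtain ⟨a, x, rfl, rfl, hx | hx⟩ := h.of_cons
    · exact (ih hx).cons_cons (f c)
    · exact (ih hx).cons_repeat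

theorem IsExpansion.exists_of_map {f : α → β} {x : List α} {ub : List β}
    (h : IsExpansion (x.map f) ub) : ∃ xb, IsExpansion x xb ∧ xb.map f = ub := by
  induction ub generalizing x with
  | nil =>
    obtain rfl : x = [] := List.map_eq_nil_iff.mp h.eq_nil
    exact ⟨[], isExpansion_nil, rfl⟩
  | cons c ub ih =>
    obtain ⟨a, w, hxw, rfl, hw | hw⟩ := h.of_cons
    all_goals obtain ⟨a, x, rfl, rfl, rfl⟩ := List.map_eq_cons_iff.mp hxw
    · obtain ⟨xb, hxb, rfl⟩ := ih hw
      exact ⟨a :: xb, hxb.cons_cons a, rfl⟩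
    · obtain ⟨xb, hxb, rfl⟩ := ih (x := a :: x) hw
      exact ⟨a :: xb, hxb.cons_repeat, rfl⟩

end Expansion

section Correspondence

variable {α β : Type*} {x y xb yb : List α}

theorem IsCorrespondence.map (f : α → β) (h : IsCorrespondence x y xb yb) :
    IsCorrespondence (x.map f) (y.map f) (xb.map f) (yb.map f) :=
  ⟨h.1.map f, h.2.1.map f, by simp [h.2.2]⟩

theorem IsCorrespondence.exists_of_map {f : α → β} {ub vb : List β}
    (h : IsCorrespondence (x.map f) (y.map f) ub vb) :
    ∃ xb yb, IsCorrespondence x y xb yb ∧ xb.map f = ub ∧ yb.map f = vb := by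
  obtain ⟨xb, hxb, rfl⟩ := h.1.exists_of_map
  obtain ⟨yb, hyb, rfl⟩ := h.2.1.exists_of_map
  exact ⟨xb, yb, ⟨hxb, hyb, by simpa using h.2.2⟩, rfl, rfl⟩

theorem IsCorrespondence.exists_sublist_length_le (h : IsCorrespondence x y xb yb) :
    ∃ xb' yb', IsCorrespondence x y xb' yb' ∧ xb'.length ≤ x.length + y.length ∧
      (xb'.zip yb').Sublist (xb.zip yb) := by
  induction xb generalizing x y yb with
  | nil =>
    obtain ⟨hx, hy, hlen⟩ := h
    obtain rfl : yb = [] := List.eq_nil_of_length_eq_zero hlen.symm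
    exact ⟨[], [], ⟨hx, hy, rfl⟩, by simp, by simp⟩
  | cons c xb ih =>
    obtain ⟨hx, hy, hlen⟩ := h
    obtain ⟨d, yb, rfl⟩ := List.exists_cons_of_length_eq_add_one hlen.symm
    replace hlen : xb.length = yb.length := by simpa using hlen
    obtain ⟨a, x, rfl, rfl, hx | hx⟩ := hx.of_cons <;>
    obtain ⟨b, y, rfl, rfl, hy | hy⟩ := hy.of_cons
    rotate_right
    · obtain ⟨xb', yb', hcorr, hshort, hsub⟩ := ih ⟨hx, hy, hlen⟩
      exact ⟨xb', yb', hcorr, hshort, hsub.cons (c, d)⟩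
    all_goals
      obtain ⟨xb', yb', ⟨hx', hy', hlen'⟩, hshort, hsub⟩ := ih ⟨hx, hy, hlen⟩
      refine ⟨c :: xb', d :: yb', ⟨?_, ?_, by simp [hlen']⟩, ?_, hsub.cons_cons (c, d)⟩
      · first | exact hx'.cons_cons c | exact hx'.cons_repeat
      · first | exact hy'.cons_cons d | exact hy'.cons_repeat
      · simp only [List.length_cons] at hshort ⊢
        omega

end Correspondence

section Cost

variable {α β : Type*} {δ δ' : α → α → ℝ}

theorem corrCost_eq_sum_zip (δ : α → α → ℝ) (xb yb : List α) :
    corrCost δ xb yb = ((xb.zip yb).map fun p => δ p.1 p.2).sum := by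
  rw [corrCost, ← List.map_uncurry_zip_eq_zipWith]
  rfl

theorem corrCost_nonneg (hδ : ∀ a b, 0 ≤ δ a b) (xb yb : List α) : 0 ≤ corrCost δ xb yb := by
  rw [corrCost_eq_sum_zip]
  exact List.sum_nonneg (List.forall_mem_map.mpr fun _ _ => hδ _ _)

theorem corrCost_le_of_sublist (hδ : ∀ a b, 0 ≤ δ a b) {xb yb xb' yb' : List α}
    (h : (xb'.zip yb').Sublist (xb.zip yb)) : corrCost δ xb' yb' ≤ corrCost δ xb yb := by
  rw [corrCost_eq_sum_zip, corrCost_eq_sum_zip]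
  exact (h.map _).sum_le_sum (List.forall_mem_map.mpr fun _ _ => hδ _ _)

theorem corrCost_map (δ : β → β → ℝ) (f : α → β) (xb yb : List α) :
    corrCost δ (xb.map f) (yb.map f) = corrCost (fun a b => δ (f a) (f b)) xb yb := by
  simp [corrCost, List.zipWith_map]

theorem corrCost_le_add_length_mul {c : ℝ} (hδδ' : ∀ a b, δ a b ≤ δ' a b + c) :
    ∀ {xb yb : List α}, xb.length = yb.length →
      corrCost δ xb yb ≤ corrCost δ' xb yb + xb.length * c
  | [], [], _ => by simp [corrCost]
  | a :: xb, b :: yb, hlen => by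
    have ih := corrCost_le_add_length_mul hδδ' (xb := xb) (yb := yb) (by simpa using hlen)
    simp only [corrCost, List.zipWith_cons_cons, List.sum_cons, List.length_cons] at ih ⊢
    push_cast
    linarith [hδδ' a b]

theorem dtw_nonneg (hδ : ∀ a b, 0 ≤ δ a b) (x y : List α) : 0 ≤ dtw δ x y :=
  Real.sInf_nonneg <| by
    rintro _ ⟨xb, yb, -, rfl⟩
    exact corrCost_nonneg hδ xb yb

theorem dtw_eq_zero_of_forall_not_isCorrespondence {x y : List α}
    (h : ∀ xb yb, ¬ IsCorrespondence x y xb yb) : dtw δ x y = 0 := by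
  rw [dtw]
  convert Real.sInf_empty
  refine Set.eq_empty_of_forall_notMem ?_
  rintro _ ⟨xb, yb, hc, -⟩
  exact h xb yb hc

theorem dtw_le_corrCost (hδ : ∀ a b, 0 ≤ δ a b) {x y xb yb : List α}
    (h : IsCorrespondence x y xb yb) : dtw δ x y ≤ corrCost δ xb yb :=
  csInf_le ⟨0, by rintro _ ⟨xb, yb, -, rfl⟩; exact corrCost_nonneg hδ xb yb⟩ ⟨xb, yb, h, rfl⟩

theorem dtw_le_corrCost_add (hδ : ∀ a b, 0 ≤ δ a b) (hδ' : ∀ a b, 0 ≤ δ' a b) {c : ℝ}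
    (hc : 0 ≤ c) (hδδ' : ∀ a b, δ a b ≤ δ' a b + c) {x y xb yb : List α}
    (h : IsCorrespondence x y xb yb) :
    dtw δ x y ≤ corrCost δ' xb yb + (x.length + y.length) * c := by
  obtain ⟨xb', yb', hcorr, hshort, hsub⟩ := h.exists_sublist_length_le
  have hshort' : (xb'.length : ℝ) ≤ x.length + y.length := by exact_mod_cast hshort
  calc dtw δ x y ≤ corrCost δ xb' yb' := dtw_le_corrCost hδ hcorr
    _ ≤ corrCost δ' xb' yb' + xb'.length * c := corrCost_le_add_length_mul hδδ' hcorr.2.2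
    _ ≤ corrCost δ' xb yb + (x.length + y.length) * c := by
      gcongr
      exact corrCost_le_of_sublist hδ' hsub

end Cost

theorem dist_le_dist_add_of_forall_dist_le {σ : Type*} [PseudoMetricSpace σ] {z : σ → σ}
    {l : ℝ} (hz : ∀ a, dist a (z a) ≤ l) (a b : σ) : dist a b ≤ dist (z a) (z b) + 2 * l := by
  have htri := dist_triangle4 a (z a) (z b) b
  rw [dist_comm (z b)] at htri
  linarith [hz a, hz b]

/-- Snapping each point to a representative at distance at most l decreases DTW by at
most 4nl for strings of length at most n. -/
theorem dtw_snap_lower {σ : Type*} [MetricSpace σ] (z : σ → σ) (l : ℝ) (hl : 0 ≤ l)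
    (hz : ∀ a, dist a (z a) ≤ l) (n : ℕ) (x y : List σ)
    (hx : x.length ≤ n) (hy : y.length ≤ n) :
    dtw dist x y - 4 * n * l ≤ dtw dist (x.map z) (y.map z) := by
  have hlen : ((x.length : ℝ) + y.length) * (2 * l) ≤ 4 * n * l := by
    have : (x.length : ℝ) + y.length ≤ 2 * n := by
      exact_mod_cast (by omega : x.length + y.length ≤ 2 * n)
    nlinarith
  by_cases hxy : ∃ xb yb, IsCorrespondence x y xb yb
  · obtain ⟨xb, yb, hcorr⟩ := hxy
    refine le_csInf ⟨_, _, _, hcorr.map z, rfl⟩ ?_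
    rintro _ ⟨_, _, hsnap, rfl⟩
    obtain ⟨xb, yb, hcorr, rfl, rfl⟩ := hsnap.exists_of_map
    have hsnapped := dtw_le_corrCost_add (fun _ _ => dist_nonneg) (fun _ _ => dist_nonneg)
      (by positivity) (dist_le_dist_add_of_forall_dist_le hz) hcorr
    rw [corrCost_map]
    linarith
  · simp only [not_exists] at hxy
    rw [dtw_eq_zero_of_forall_not_isCorrespondence hxy]
    linarith [dtw_nonneg (δ := dist) (fun _ _ => dist_nonneg) (x.map z) (y.map z),
      show 0 ≤ 4 * n * l by positivity]
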